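/- arXiv:1805.06613 — 2 statements merged into one kernel-verified Lean document; each statement's English description precedes it below -/
import Mathlib

section
/- Let a, b > 0 be real numbers and 0 < t < 1. Then ((a ∇ b)/(a ! b))^{4t(1-t)} · !_t(a,b) ≤ a ∇ b. -/
/-- The weighted harmonic mean of positive reals: `a !_t b = ((1-t)a⁻¹ + t b⁻¹)⁻¹`. -/
noncomputable def wharm (t a b : ℝ) : ℝ := ((1 - t) * a⁻¹ + t * b⁻¹)⁻¹

/-- The harmonic Heinz mean `!_t(a,b) = (a !_t b + a !_{1-t} b)/2`. -/
noncomputable def heinzHarm (t a b : ℝ) : ℝ := (wharm t a b + wharm (1 - t) a b) / 2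

/-!
Since `((1-t)b + ta)(tb + (1-t)a) = ab + t(1-t)(a-b)²`, the Heinz mean has the closed form
`!_t(a,b) = ab(a+b) / (2(ab + t(1-t)(a-b)²))`. Writing `A = a ∇ b` and `H = a ! b`, this gives
`A / !_t(a,b) = 1 + r (A / H - 1)` with `r = 4t(1-t) ∈ [0,1]`, and Bernoulli's inequality
`(A / H)^r ≤ 1 + r (A / H - 1)` turns this identity into the claim.
-/

section

variable {a b t : ℝ}

lemma wharm_eq_div (ha : a ≠ 0) (hb : b ≠ 0) : wharm t a b = a * b / ((1 - t) * b + t * a) := by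
  rw [wharm, div_eq_mul_inv, ← inv_inv (a * b), ← mul_inv]
  congr 1
  field_simp

lemma one_sub_mul_add_mul_pos (ha : 0 < a) (hb : 0 < b) (ht0 : 0 ≤ t) (ht1 : t ≤ 1) :
    0 < (1 - t) * a + t * b := by
  rcases ht0.eq_or_lt with rfl | ht0
  · simpa using ha
  · nlinarith [mul_pos ht0 hb]

lemma wharm_pos (ha : 0 < a) (hb : 0 < b) (ht0 : 0 ≤ t) (ht1 : t ≤ 1) : 0 < wharm t a b := by
  rw [wharm_eq_div ha.ne' hb.ne']
  exact div_pos (mul_pos ha hb) (one_sub_mul_add_mul_pos hb ha ht0 ht1)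

lemma heinzHarm_pos (ha : 0 < a) (hb : 0 < b) (ht0 : 0 ≤ t) (ht1 : t ≤ 1) :
    0 < heinzHarm t a b := by
  have := wharm_pos ha hb ht0 ht1
  have := wharm_pos (t := 1 - t) ha hb (by linarith) (by linarith)
  rw [heinzHarm]
  positivity

lemma heinzHarm_eq (ha : 0 < a) (hb : 0 < b) (ht0 : 0 ≤ t) (ht1 : t ≤ 1) :
    heinzHarm t a b = a * b * (a + b) / (2 * (a * b + t * (1 - t) * (a - b) ^ 2)) := by
  have h₁ := one_sub_mul_add_mul_pos hb ha ht0 ht1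
  have h₂ : 0 < t * b + (1 - t) * a := by linarith [one_sub_mul_add_mul_pos ha hb ht0 ht1]
  rw [heinzHarm, wharm_eq_div ha.ne' hb.ne', wharm_eq_div ha.ne' hb.ne', sub_sub_cancel,
    div_add_div _ _ h₁.ne' h₂.ne', div_div, div_eq_div_iff (by positivity) (by positivity)]
  ring

lemma arith_div_heinzHarm (ha : 0 < a) (hb : 0 < b) (ht0 : 0 ≤ t) (ht1 : t ≤ 1) :
    (a + b) / 2 / heinzHarm t a b
      = 1 + 4 * t * (1 - t) * ((a + b) / 2 / wharm (1 / 2) a b - 1) := by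
  rw [heinzHarm_eq ha hb ht0 ht1, wharm_eq_div ha.ne' hb.ne']
  field_simp
  ring

end

theorem stmt_4 (a b t : ℝ) (ha : 0 < a) (hb : 0 < b) (ht0 : 0 < t) (ht1 : t < 1) :
    (((a + b) / 2) / wharm (1 / 2) a b) ^ (4 * t * (1 - t)) * heinzHarm t a b
      ≤ (a + b) / 2 := by
  set ratio := (a + b) / 2 / wharm (1 / 2) a b
  have hheinz := heinzHarm_pos ha hb ht0.le ht1.le
  have hratio : 0 ≤ ratio :=
    div_nonneg (by positivity) (wharm_pos ha hb (by norm_num) (by norm_num)).le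
  have bernoulli : ratio ^ (4 * t * (1 - t)) ≤ 1 + 4 * t * (1 - t) * (ratio - 1) := by
    simpa using rpow_one_add_le_one_add_mul_self (s := ratio - 1) (by linarith)
      (by nlinarith) (by nlinarith [sq_nonneg (2 * t - 1)])
  calc ratio ^ (4 * t * (1 - t)) * heinzHarm t a b
      ≤ (1 + 4 * t * (1 - t) * (ratio - 1)) * heinzHarm t a b := by gcongr
    _ = (a + b) / 2 := by
      rw [← arith_div_heinzHarm ha hb ht0.le ht1.le, div_mul_cancel₀ _ hheinz.ne']
end

section
/- Fix a real number c > 0 and define f : (0,1) → ℝ by f(t) = ((1 #_t c)/(1 !_t c))^{1/(t(1-t))}, where x #_t y = x^{1-t} y^t and x !_t y = ((1-t)x⁻¹ + t y⁻¹)⁻¹. If c < 1, then f is decreasing on (0,1); if c > 1, then f is increasing on (0,1). -/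
/-- The weighted geometric mean: `a #_t b = a^(1-t) * b^t`. -/
noncomputable def wgeom (t a b : ℝ) : ℝ := a ^ (1 - t) * b ^ t

lemma ratio_eq (c t : ℝ) :
    wgeom t 1 c / wharm t 1 c = c ^ t * (1 - t + t * c⁻¹) := by
  rw [wgeom, wharm, Real.one_rpow, one_mul, inv_one, mul_one, div_eq_mul_inv, inv_inv]

lemma hasSum_h (a : ℝ) (ha0 : 0 < a) (ha1 : a < 1) {t : ℝ} (ht : t ∈ Set.Ioo (0:ℝ) 1) :
    HasSum (fun n : ℕ => a ^ (n+1) / (n+1) * ∑ k ∈ Finset.range n, t ^ k)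
      ((-t * Real.log (1 - a) + Real.log (1 - t * a)) / (t * (1 - t))) := by
  obtain ⟨ht0, ht1⟩ := ht
  have hta : |t * a| < 1 := by
    rw [abs_of_pos (by positivity)]
    nlinarith
  have ha : |a| < 1 := by rw [abs_of_pos ha0]; exact ha1
  have S1 := Real.hasSum_pow_div_log_of_abs_lt_one hta
  have S2 := (Real.hasSum_pow_div_log_of_abs_lt_one ha).mul_left t
  have S3 := S2.sub S1
  have htt : t * (1 - t) ≠ 0 := ne_of_gt (by nlinarith)
  have S4 := S3.div_const (t * (1 - t))
  have key : ∀ n : ℕ, (t * (a ^ (n+1) / (n+1)) - (t * a) ^ (n+1) / (n+1)) / (t * (1 - t))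
      = a ^ (n+1) / (n+1) * ∑ k ∈ Finset.range n, t ^ k := by
    intro n
    rw [div_eq_iff htt]
    have g : (∑ k ∈ Finset.range n, t ^ k) * (t - 1) = t ^ n - 1 := geom_sum_mul t n
    have hmp : (t * a) ^ (n+1) = t ^ (n+1) * a ^ (n+1) := mul_pow t a (n+1)
    rw [hmp]
    linear_combination (t * (a ^ (n+1) / ((n:ℝ)+1))) * g
  have hv : (t * -Real.log (1 - a) - -Real.log (1 - t * a)) / (t * (1 - t))
      = (-t * Real.log (1 - a) + Real.log (1 - t * a)) / (t * (1 - t)) := by ring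
  simp only [key] at S4
  rw [← hv]
  exact S4

lemma mono_core (c : ℝ) (hc1 : 1 < c) :
    MonotoneOn
      (fun t : ℝ => (wgeom t 1 c / wharm t 1 c) ^ (1 / (t * (1 - t))))
      (Set.Ioo (0 : ℝ) 1) := by
  have hc : 0 < c := lt_trans one_pos hc1
  set a : ℝ := 1 - c⁻¹ with ha_def
  have hci : c⁻¹ < 1 := inv_lt_one_of_one_lt₀ hc1
  have ha0 : 0 < a := by simp only [ha_def]; linarith
  have ha1 : a < 1 := by
    have : 0 < c⁻¹ := inv_pos.2 hc
    simp only [ha_def]; linarith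
  have key : ∀ t ∈ Set.Ioo (0:ℝ) 1,
      (wgeom t 1 c / wharm t 1 c) ^ (1 / (t * (1 - t)))
        = Real.exp ((-t * Real.log (1 - a) + Real.log (1 - t * a)) / (t * (1 - t))) := by
    intro t ht
    obtain ⟨ht0, ht1⟩ := ht
    have hr : wgeom t 1 c / wharm t 1 c = c ^ t * (1 - t * a) := by
      rw [ratio_eq]; simp only [ha_def]; ring
    have hpos1 : 0 < 1 - t * a := by nlinarith
    have hrp : (0:ℝ) < c ^ t := Real.rpow_pos_of_pos hc t
    have hpos : 0 < c ^ t * (1 - t * a) := by positivity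
    rw [hr, Real.rpow_def_of_pos hpos]
    congr 1
    rw [Real.log_mul (ne_of_gt hrp) (ne_of_gt hpos1), Real.log_rpow hc]
    have hla : Real.log (1 - a) = -Real.log c := by
      simp only [ha_def, sub_sub_cancel, Real.log_inv]
    rw [hla]
    ring
  intro s hs t ht hst
  simp only
  rw [key s hs, key t ht, Real.exp_le_exp]
  refine hasSum_le (fun n => ?_) (hasSum_h a ha0 ha1 hs) (hasSum_h a ha0 ha1 ht)
  have h1 : (0:ℝ) ≤ a ^ (n+1) / (n+1) := by positivity
  refine mul_le_mul_of_nonneg_left (Finset.sum_le_sum fun k _ => ?_) h1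
  exact pow_le_pow_left₀ hs.1.le hst k

lemma flip_eq (c : ℝ) (hc : 0 < c) {t : ℝ} :
    (wgeom t 1 c / wharm t 1 c) ^ (1 / (t * (1 - t)))
      = (wgeom (1-t) 1 c⁻¹ / wharm (1-t) 1 c⁻¹) ^ (1 / ((1-t) * (1 - (1-t)))) := by
  have h1 : 1 - (1 - t) = t := by ring
  have he : (1:ℝ) / ((1-t) * (1 - (1-t))) = 1 / (t * (1-t)) := by ring
  have hb : wgeom (1-t) 1 c⁻¹ / wharm (1-t) 1 c⁻¹ = wgeom t 1 c / wharm t 1 c := by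
    rw [ratio_eq, ratio_eq, h1, inv_inv, Real.inv_rpow hc.le, Real.rpow_sub hc,
      Real.rpow_one, inv_div, div_mul_eq_mul_div]
    rw [eq_comm, eq_div_iff hc.ne']
    field_simp
    ring
  rw [hb, he]

theorem stmt_14 (c : ℝ) (hc : 0 < c) :
    (c < 1 →
      AntitoneOn
        (fun t : ℝ => (wgeom t 1 c / wharm t 1 c) ^ (1 / (t * (1 - t))))
        (Set.Ioo (0 : ℝ) 1)) ∧
    (1 < c →
      MonotoneOn
        (fun t : ℝ => (wgeom t 1 c / wharm t 1 c) ^ (1 / (t * (1 - t))))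
        (Set.Ioo (0 : ℝ) 1)) := by
  constructor
  · intro hc1
    have hmono := mono_core c⁻¹ (one_lt_inv₀ hc |>.2 hc1)
    intro s hs t ht hst
    simp only
    rw [flip_eq c hc, flip_eq c hc]
    exact hmono ⟨by linarith [ht.2], by linarith [ht.1]⟩
      ⟨by linarith [hs.2], by linarith [hs.1]⟩ (by linarith)
  · exact fun h => mono_core c h
end
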